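/- (Theorem 1) Suppose Ĉ is the maximal controlled invariant set of the auxiliary system Σ_aux within X ⊖ D_τ (i.e., Ĉ is controlled invariant within X ⊖ D_τ for Σ_aux and contains every set controlled invariant within X ⊖ D_τ for Σ_aux), and suppose moreover that Ĉ = ⋂_{j≥0} V̂_j, where V̂_0 = X ⊖ D_τ and V̂_{j+1} = Pre_aux(V̂_j) ∩ (X ⊖ D_τ) with Pre_aux(V) = {x̂ ∈ ℝ^n : ∃ u ∈ U, ∀ d ∈ D, f̂(x̂,u,d) ∈ V}. Then C_ext is the maximal controlled invariant set of the augmented system Σ_aug within S: C_ext is controlled invariant within S for Σ_aug, and every set controlled invariant within S for Σ_aug is contained in C_ext. -/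
import Mathlib


open Pointwise

/-- The Minkowski difference `S₁ ⊖ S₂ = {x : x + y ∈ S₁ for all y ∈ S₂}`. -/
def minkDiff {n : ℕ} (S₁ S₂ : Set (Fin n → ℝ)) : Set (Fin n → ℝ) :=
  {x | ∀ y ∈ S₂, x + y ∈ S₁}

/-- `D_τ = A⁰FD ⊕ A¹FD ⊕ ⋯ ⊕ A^{τ-1}FD`, the Minkowski sum of the sets `A^{i-1} F D`
for `i = 1, …, τ`. -/
def Dtau {n k : ℕ} (τ : ℕ) (A : Matrix (Fin n) (Fin n) ℝ) (F : Matrix (Fin n) (Fin k) ℝ)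
    (D : Set (Fin k → ℝ)) : Set (Fin n → ℝ) :=
  ∑ i ∈ Finset.Icc 1 τ, (fun v => (A ^ (i - 1)).mulVec (F.mulVec v)) '' D

/-- The transition map of the augmented system `Σ_aug` on states
`(x, u₁, …, u_τ) ∈ ℝⁿ × (ℝᵐ)^τ`:
`g((x,u₁,…,u_τ), u, d) = (A x + B u₁ + F d, u₂, …, u_τ, u)`. -/
def gAug {n m k : ℕ} (τ : ℕ) (hτ : 0 < τ) (A : Matrix (Fin n) (Fin n) ℝ)
    (B : Matrix (Fin n) (Fin m) ℝ) (F : Matrix (Fin n) (Fin k) ℝ)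
    (z : (Fin n → ℝ) × (Fin τ → Fin m → ℝ)) (u : Fin m → ℝ) (d : Fin k → ℝ) :
    (Fin n → ℝ) × (Fin τ → Fin m → ℝ) :=
  (A.mulVec z.1 + B.mulVec (z.2 ⟨0, hτ⟩) + F.mulVec d,
    fun i => if h : (i : ℕ) + 1 < τ then z.2 ⟨(i : ℕ) + 1, h⟩ else u)

/-- The safe set `S = X × U^τ` of `Σ_aug`. -/
def safeAug {n m : ℕ} (τ : ℕ) (U : Set (Fin m → ℝ)) (X : Set (Fin n → ℝ)) :
    Set ((Fin n → ℝ) × (Fin τ → Fin m → ℝ)) :=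
  {z | z.1 ∈ X ∧ ∀ i : Fin τ, z.2 i ∈ U}

/-- `C` is controlled invariant within `S = X × U^τ` for the augmented system `Σ_aug`. -/
def CtrlInvAug {n m k : ℕ} (τ : ℕ) (hτ : 0 < τ) (A : Matrix (Fin n) (Fin n) ℝ)
    (B : Matrix (Fin n) (Fin m) ℝ) (F : Matrix (Fin n) (Fin k) ℝ)
    (U : Set (Fin m → ℝ)) (D : Set (Fin k → ℝ)) (X : Set (Fin n → ℝ))
    (C : Set ((Fin n → ℝ) × (Fin τ → Fin m → ℝ))) : Prop :=
  C ⊆ safeAug τ U X ∧ ∀ z ∈ C, ∃ u ∈ U, ∀ d ∈ D, gAug τ hτ A B F z u d ∈ C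

/-- The transition map of the auxiliary system `Σ_aux`:
`f̂(x̂, u, d) = A x̂ + B u + A^τ F d`. -/
def fAux {n m k : ℕ} (τ : ℕ) (A : Matrix (Fin n) (Fin n) ℝ)
    (B : Matrix (Fin n) (Fin m) ℝ) (F : Matrix (Fin n) (Fin k) ℝ)
    (xh : Fin n → ℝ) (u : Fin m → ℝ) (d : Fin k → ℝ) : Fin n → ℝ :=
  A.mulVec xh + B.mulVec u + (A ^ τ).mulVec (F.mulVec d)

/-- `Ĉ` is controlled invariant within `X ⊖ D_τ` for the auxiliary system `Σ_aux`. -/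
def CtrlInvAux {n m k : ℕ} (τ : ℕ) (A : Matrix (Fin n) (Fin n) ℝ)
    (B : Matrix (Fin n) (Fin m) ℝ) (F : Matrix (Fin n) (Fin k) ℝ)
    (U : Set (Fin m → ℝ)) (D : Set (Fin k → ℝ)) (X : Set (Fin n → ℝ))
    (Ch : Set (Fin n → ℝ)) : Prop :=
  Ch ⊆ minkDiff X (Dtau τ A F D) ∧
    ∀ xh ∈ Ch, ∃ u ∈ U, ∀ d ∈ D, fAux τ A B F xh u d ∈ Ch

/-- The prediction map on augmented states:
`x̂_τ(x, u₁, …, u_τ) = A^τ x + Σ_{i=1}^{τ} A^{i-1} B u_{τ-i+1}`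
(written with the 0-based index `q = τ - i`, so that the coefficient of `u_{q+1}` is
`A^{τ-1-q}`). -/
def predMap {n m : ℕ} (τ : ℕ) (A : Matrix (Fin n) (Fin n) ℝ)
    (B : Matrix (Fin n) (Fin m) ℝ) (z : (Fin n → ℝ) × (Fin τ → Fin m → ℝ)) : Fin n → ℝ :=
  (A ^ τ).mulVec z.1 + ∑ q : Fin τ, (A ^ (τ - 1 - (q : ℕ))).mulVec (B.mulVec (z.2 q))

/-- `C_τ = {(x, u₁, …, u_τ) : A^τ x + Σ_{i=1}^{τ} A^{i-1} B u_{τ-i+1} ∈ Ĉ}`. -/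
def Ctau {n m : ℕ} (τ : ℕ) (A : Matrix (Fin n) (Fin n) ℝ) (B : Matrix (Fin n) (Fin m) ℝ)
    (Ch : Set (Fin n → ℝ)) : Set ((Fin n → ℝ) × (Fin τ → Fin m → ℝ)) :=
  {z | predMap τ A B z ∈ Ch}

/-- For `0 ≤ j ≤ τ-1`,
`C_j = {(x, u₁,…,u_τ) : A^j x + Σ_{i=1}^{j} A^{i-1} B u_{j-i+1} ∈ X ⊖ (A⁰FD ⊕ ⋯ ⊕ A^{j-1}FD)}`
(written with the 0-based index `q = j - i`, only indices `q < j` contributing). -/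
def Cj {n m k : ℕ} (τ : ℕ) (A : Matrix (Fin n) (Fin n) ℝ) (B : Matrix (Fin n) (Fin m) ℝ)
    (F : Matrix (Fin n) (Fin k) ℝ) (D : Set (Fin k → ℝ)) (X : Set (Fin n → ℝ)) (j : ℕ) :
    Set ((Fin n → ℝ) × (Fin τ → Fin m → ℝ)) :=
  {z | (A ^ j).mulVec z.1 +
        (∑ q : Fin τ, if (q : ℕ) < j then (A ^ (j - 1 - (q : ℕ))).mulVec (B.mulVec (z.2 q))
          else 0) ∈ minkDiff X (Dtau j A F D)}

/-- `C_ext = C_0 ∩ C_1 ∩ ⋯ ∩ C_{τ-1} ∩ C_τ ∩ S`. -/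
def Cext {n m k : ℕ} (τ : ℕ) (A : Matrix (Fin n) (Fin n) ℝ) (B : Matrix (Fin n) (Fin m) ℝ)
    (F : Matrix (Fin n) (Fin k) ℝ) (U : Set (Fin m → ℝ)) (D : Set (Fin k → ℝ))
    (X : Set (Fin n → ℝ)) (Ch : Set (Fin n → ℝ)) :
    Set ((Fin n → ℝ) × (Fin τ → Fin m → ℝ)) :=
  (⋂ j ∈ Finset.range τ, Cj τ A B F D X j) ∩ Ctau τ A B Ch ∩ safeAug τ U X

/-- The fixed-point iteration for the auxiliary system `Σ_aux` within `X ⊖ D_τ`: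
`V̂ 0 = X ⊖ D_τ` and `V̂ (j+1) = Pre_aux(V̂ j) ∩ (X ⊖ D_τ)`. -/
def VhatAux {n m k : ℕ} (τ : ℕ) (A : Matrix (Fin n) (Fin n) ℝ)
    (B : Matrix (Fin n) (Fin m) ℝ) (F : Matrix (Fin n) (Fin k) ℝ)
    (U : Set (Fin m → ℝ)) (D : Set (Fin k → ℝ)) (X : Set (Fin n → ℝ)) :
    ℕ → Set (Fin n → ℝ)
  | 0 => minkDiff X (Dtau τ A F D)
  | j + 1 =>
      {xh | ∃ u ∈ U, ∀ d ∈ D, fAux τ A B F xh u d ∈ VhatAux τ A B F U D X j} ∩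
        minkDiff X (Dtau τ A F D)

section AuxLemmas

variable {n m k : ℕ} {τ : ℕ} (A : Matrix (Fin n) (Fin n) ℝ) (B : Matrix (Fin n) (Fin m) ℝ)
  (F : Matrix (Fin n) (Fin k) ℝ) {D : Set (Fin k → ℝ)}

/-- Extension of the delay queue to ℕ. -/
def extq (z : (Fin n → ℝ) × (Fin τ → Fin m → ℝ)) (i : ℕ) : Fin m → ℝ :=
  if h : i < τ then z.2 ⟨i, h⟩ else 0

/-- The `j`-step prediction map on augmented states (ignoring disturbances). -/
def phi (A : Matrix (Fin n) (Fin n) ℝ) (B : Matrix (Fin n) (Fin m) ℝ) (j : ℕ)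
    (z : (Fin n → ℝ) × (Fin τ → Fin m → ℝ)) : Fin n → ℝ :=
  (A ^ j).mulVec z.1 +
    ∑ q : Fin τ, if (q : ℕ) < j then (A ^ (j - 1 - (q : ℕ))).mulVec (B.mulVec (z.2 q)) else 0

lemma phi_eq {j : ℕ} (hj : j ≤ τ) (z : (Fin n → ℝ) × (Fin τ → Fin m → ℝ)) :
    phi A B j z = (A ^ j).mulVec z.1 +
      ∑ i ∈ Finset.range j, (A ^ (j - 1 - i)).mulVec (B.mulVec (extq z i)) := by
  unfold phi
  congr 1
  have h1 : ∀ q : Fin τ,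
      (if (q : ℕ) < j then (A ^ (j - 1 - (q : ℕ))).mulVec (B.mulVec (z.2 q)) else 0)
        = (fun i : ℕ => if i < j then (A ^ (j - 1 - i)).mulVec (B.mulVec (extq z i)) else 0)
            (q : ℕ) := by
    intro q
    simp only [extq, q.isLt, dif_pos]
  rw [Finset.sum_congr rfl fun q _ => h1 q,
    Fin.sum_univ_eq_sum_range
      (fun i : ℕ => if i < j then (A ^ (j - 1 - i)).mulVec (B.mulVec (extq z i)) else 0) τ]
  rw [← Finset.sum_subset (Finset.range_subset_range.mpr hj)]
  · exact Finset.sum_congr rfl fun i hi => if_pos (Finset.mem_range.mp hi)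
  · intro i _ hi
    exact if_neg (by simpa using hi)

lemma phi_top (z : (Fin n → ℝ) × (Fin τ → Fin m → ℝ)) :
    phi A B τ z = predMap τ A B z := by
  unfold phi predMap
  congr 1
  exact Finset.sum_congr rfl fun q _ => if_pos q.isLt

lemma phi_zero (z : (Fin n → ℝ) × (Fin τ → Fin m → ℝ)) :
    phi A B 0 z = z.1 := by
  unfold phi
  simp

lemma phi_g (hτ0 : 0 < τ) {j : ℕ} (hj : j < τ) (z : (Fin n → ℝ) × (Fin τ → Fin m → ℝ))
    (u : Fin m → ℝ) (d : Fin k → ℝ) :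
    phi A B j (gAug τ hτ0 A B F z u d) = phi A B (j + 1) z + (A ^ j).mulVec (F.mulVec d) := by
  rw [phi_eq A B hj.le, phi_eq A B (show j + 1 ≤ τ from hj)]
  have hq : ∀ i ∈ Finset.range j,
      (A ^ (j - 1 - i)).mulVec (B.mulVec (extq (gAug τ hτ0 A B F z u d) i)) =
        (A ^ (j - 1 - i)).mulVec (B.mulVec (extq z (i + 1))) := by
    intro i hi
    have hi' : i < j := Finset.mem_range.mp hi
    have h1 : i < τ := lt_trans hi' hj
    have h2 : i + 1 < τ := by omega
    simp only [extq, gAug, dif_pos h1, Fin.val_mk, dif_pos h2]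
  rw [Finset.sum_congr rfl hq]
  have hsum : ∑ i ∈ Finset.range (j + 1), (A ^ (j + 1 - 1 - i)).mulVec (B.mulVec (extq z i)) =
      ∑ i ∈ Finset.range j, (A ^ (j - 1 - i)).mulVec (B.mulVec (extq z (i + 1))) +
        (A ^ j).mulVec (B.mulVec (extq z 0)) := by
    rw [Finset.sum_range_succ' (fun i => (A ^ (j + 1 - 1 - i)).mulVec (B.mulVec (extq z i))) j]
    simp only [Nat.add_sub_cancel, Nat.sub_zero]
    rw [show (∑ i ∈ Finset.range j, (A ^ (j - (i + 1))).mulVec (B.mulVec (extq z (i + 1)))) =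
        ∑ i ∈ Finset.range j, (A ^ (j - 1 - i)).mulVec (B.mulVec (extq z (i + 1))) from
      Finset.sum_congr rfl fun i _ => by rw [show j - (i + 1) = j - 1 - i from by omega]]
  rw [hsum]
  have hz0 : extq z 0 = z.2 ⟨0, hτ0⟩ := dif_pos hτ0
  have hg1 : (gAug τ hτ0 A B F z u d).1
      = A.mulVec z.1 + B.mulVec (z.2 ⟨0, hτ0⟩) + F.mulVec d := rfl
  rw [hg1, hz0, Matrix.mulVec_add, Matrix.mulVec_add, Matrix.mulVec_mulVec, ← pow_succ]
  abel

lemma mulVec_sum' (M : Matrix (Fin n) (Fin n) ℝ) (s : Finset ℕ) (f : ℕ → Fin n → ℝ) :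
    M.mulVec (∑ i ∈ s, f i) = ∑ i ∈ s, M.mulVec (f i) := by
  induction s using Finset.cons_induction with
  | empty => simp
  | cons a s ha ih => rw [Finset.cons_eq_insert, Finset.sum_insert ha, Finset.sum_insert ha, Matrix.mulVec_add, ih]

lemma predMap_g (hτ0 : 0 < τ) (z : (Fin n → ℝ) × (Fin τ → Fin m → ℝ))
    (u : Fin m → ℝ) (d : Fin k → ℝ) :
    predMap τ A B (gAug τ hτ0 A B F z u d) = fAux τ A B F (predMap τ A B z) u d := by
  obtain ⟨T, rfl⟩ : ∃ T, τ = T + 1 := ⟨τ - 1, by omega⟩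
  rw [← phi_top, ← phi_top, phi_eq A B le_rfl, phi_eq A B le_rfl]
  unfold fAux
  have hl : ∑ i ∈ Finset.range (T + 1),
      (A ^ (T + 1 - 1 - i)).mulVec (B.mulVec (extq (gAug (T + 1) hτ0 A B F z u d) i)) =
      (∑ i ∈ Finset.range T, (A ^ (T - i)).mulVec (B.mulVec (extq z (i + 1)))) + B.mulVec u := by
    rw [Finset.sum_range_succ]
    congr 1
    · refine Finset.sum_congr rfl fun i hi => ?_
      have hi' : i < T := Finset.mem_range.mp hi
      have h1 : i < T + 1 := by omega
      have h2 : i + 1 < T + 1 := by omega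
      simp only [extq, gAug, dif_pos h1, Fin.val_mk, dif_pos h2]
      rw [show T + 1 - 1 - i = T - i from by omega]
    · have h1 : T < T + 1 := by omega
      simp only [extq, gAug, dif_pos h1, Fin.val_mk]
      rw [dif_neg (by omega), show T + 1 - 1 - T = 0 from by omega, pow_zero,
        Matrix.one_mulVec]
  rw [hl]
  have hg : (A ^ (T + 1)).mulVec ((gAug (T + 1) hτ0 A B F z u d).1) =
      (A ^ (T + 1 + 1)).mulVec z.1 + (A ^ (T + 1)).mulVec (B.mulVec (extq z 0)) +
        (A ^ (T + 1)).mulVec (F.mulVec d) := by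
    have hg1 : (gAug (T + 1) hτ0 A B F z u d).1
        = A.mulVec z.1 + B.mulVec (z.2 ⟨0, hτ0⟩) + F.mulVec d := rfl
    rw [hg1, Matrix.mulVec_add, Matrix.mulVec_add, Matrix.mulVec_mulVec, ← pow_succ,
      show extq z 0 = z.2 ⟨0, hτ0⟩ from dif_pos hτ0]
  rw [hg]
  have hr : A.mulVec ((A ^ (T + 1)).mulVec z.1 +
      ∑ i ∈ Finset.range (T + 1), (A ^ (T + 1 - 1 - i)).mulVec (B.mulVec (extq z i))) =
      (A ^ (T + 1 + 1)).mulVec z.1 +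
        ((∑ i ∈ Finset.range T, (A ^ (T - i)).mulVec (B.mulVec (extq z (i + 1)))) +
          (A ^ (T + 1)).mulVec (B.mulVec (extq z 0))) := by
    rw [Matrix.mulVec_add, Matrix.mulVec_mulVec, ← pow_succ', mulVec_sum']
    congr 1
    have hterm : ∀ i ∈ Finset.range (T + 1),
        A.mulVec ((A ^ (T + 1 - 1 - i)).mulVec (B.mulVec (extq z i))) =
          (A ^ (T + 1 - i)).mulVec (B.mulVec (extq z i)) := by
      intro i hi
      have hi' : i < T + 1 := Finset.mem_range.mp hi
      rw [Matrix.mulVec_mulVec, ← pow_succ', show T + 1 - 1 - i + 1 = T + 1 - i from by omega]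
    rw [Finset.sum_congr rfl hterm,
      Finset.sum_range_succ' (fun i => (A ^ (T + 1 - i)).mulVec (B.mulVec (extq z i))) T]
    simp only [Nat.add_sub_cancel, Nat.sub_zero]
    rw [show (∑ i ∈ Finset.range T, (A ^ (T + 1 - (i + 1))).mulVec (B.mulVec (extq z (i + 1)))) =
        ∑ i ∈ Finset.range T, (A ^ (T - i)).mulVec (B.mulVec (extq z (i + 1))) from
      Finset.sum_congr rfl fun i _ => by rw [show T + 1 - (i + 1) = T - i from by omega]]
  rw [hr]
  abel

lemma mem_Dtau_zero {y : Fin n → ℝ} : y ∈ Dtau 0 A F D ↔ y = 0 := by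
  unfold Dtau
  rw [Finset.Icc_eq_empty (by omega), Finset.sum_empty]
  exact Set.mem_zero

lemma Dtau_succ (j : ℕ) :
    Dtau (j + 1) A F D = Dtau j A F D + (fun v => (A ^ j).mulVec (F.mulVec v)) '' D := by
  unfold Dtau
  rw [Finset.sum_Icc_succ_top (by omega)]
  simp

lemma mem_of_minkDiff_zero {X : Set (Fin n → ℝ)} {x : Fin n → ℝ}
    (hx : x ∈ minkDiff X (Dtau 0 A F D)) : x ∈ X := by
  have := hx 0 ((mem_Dtau_zero A F).mpr rfl)
  simpa using this

lemma minkDiff_zero_mem {X : Set (Fin n → ℝ)} {x : Fin n → ℝ} (hx : x ∈ X) :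
    x ∈ minkDiff X (Dtau 0 A F D) := by
  intro y hy
  rw [(mem_Dtau_zero A F).mp hy]
  simpa using hx

lemma step_mem {j : ℕ} {X : Set (Fin n → ℝ)} {x : Fin n → ℝ} {d : Fin k → ℝ} (hd : d ∈ D)
    (hx : x ∈ minkDiff X (Dtau (j + 1) A F D)) :
    x + (A ^ j).mulVec (F.mulVec d) ∈ minkDiff X (Dtau j A F D) := by
  intro y hy
  have hmem : y + (A ^ j).mulVec (F.mulVec d) ∈ Dtau (j + 1) A F D := by
    rw [Dtau_succ]
    exact Set.add_mem_add hy ⟨d, hd, rfl⟩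
  have h2 := hx _ hmem
  have heq : x + (A ^ j).mulVec (F.mulVec d) + y = x + (y + (A ^ j).mulVec (F.mulVec d)) := by
    abel
  rw [heq]
  exact h2

end AuxLemmas

/-- (Theorem 1) If `Ĉ` is the maximal controlled invariant set of `Σ_aux` within `X ⊖ D_τ`
and `Ĉ = ⋂_{j≥0} V̂_j`, then `C_ext` is the maximal controlled invariant set of `Σ_aug`
within `S`. -/
theorem cext_maximal (n m k : ℕ) (hn : 0 < n) (hm : 0 < m) (hk : 0 < k)
    (τ : ℕ) (hτ : 1 ≤ τ) (A : Matrix (Fin n) (Fin n) ℝ) (B : Matrix (Fin n) (Fin m) ℝ)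
    (F : Matrix (Fin n) (Fin k) ℝ) (U : Set (Fin m → ℝ)) (D : Set (Fin k → ℝ))
    (X : Set (Fin n → ℝ)) (hD : D.Nonempty) (Ch : Set (Fin n → ℝ))
    (hCh : CtrlInvAux τ A B F U D X Ch)
    (hChMax : ∀ Ch' : Set (Fin n → ℝ), CtrlInvAux τ A B F U D X Ch' → Ch' ⊆ Ch)
    (hChLim : Ch = ⋂ j : ℕ, VhatAux τ A B F U D X j) :
    CtrlInvAug τ hτ A B F U D X (Cext τ A B F U D X Ch) ∧
      ∀ C : Set ((Fin n → ℝ) × (Fin τ → Fin m → ℝ)),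
        CtrlInvAug τ hτ A B F U D X C → C ⊆ Cext τ A B F U D X Ch := by
  have hCext : ∀ w : (Fin n → ℝ) × (Fin τ → Fin m → ℝ), w ∈ Cext τ A B F U D X Ch ↔
      ((∀ j < τ, phi A B j w ∈ minkDiff X (Dtau j A F D)) ∧ predMap τ A B w ∈ Ch ∧
        w ∈ safeAug τ U X) := by
    intro w
    constructor
    · rintro ⟨⟨h1, h2⟩, h3⟩
      exact ⟨fun j hj => Set.mem_iInter₂.mp h1 j (Finset.mem_range.mpr hj), h2, h3⟩
    · rintro ⟨h1, h2, h3⟩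
      exact ⟨⟨Set.mem_iInter₂.mpr fun j hj => h1 j (Finset.mem_range.mp hj), h2⟩, h3⟩
  constructor
  · constructor
    · intro z hz
      exact ((hCext z).mp hz).2.2
    · intro z hz
      obtain ⟨hzj, hzt, hzs⟩ := (hCext z).mp hz
      obtain ⟨u, hu, hstep⟩ := hCh.2 _ hzt
      refine ⟨u, hu, fun d hd => ?_⟩
      have hgj : ∀ j < τ, phi A B j (gAug τ hτ A B F z u d) ∈ minkDiff X (Dtau j A F D) := by
        intro j hj
        rw [phi_g A B F hτ hj]
        apply step_mem A F hd
        rcases Nat.lt_or_ge (j + 1) τ with h | h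
        · exact hzj (j + 1) h
        · have hjτ : j + 1 = τ := by omega
          rw [hjτ, phi_top]
          exact hCh.1 hzt
      refine (hCext _).mpr ⟨hgj, ?_, ?_, ?_⟩
      · rw [predMap_g A B F hτ]
        exact hstep d hd
      · have h0 := hgj 0 hτ
        rw [phi_zero] at h0
        exact mem_of_minkDiff_zero A F h0
      · intro i
        show (if h : (i : ℕ) + 1 < τ then z.2 ⟨(i : ℕ) + 1, h⟩ else u) ∈ U
        split_ifs with h
        · exact hzs.2 _
        · exact hu
  · intro C hC
    obtain ⟨hCS, hCstep⟩ := hC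
    have hphi : ∀ j, j ≤ τ → ∀ z ∈ C, phi A B j z ∈ minkDiff X (Dtau j A F D) := by
      intro j
      induction j with
      | zero =>
        intro _ z hz
        rw [phi_zero]
        exact minkDiff_zero_mem A F (hCS hz).1
      | succ j ih =>
        intro hjτ z hz
        obtain ⟨u, hu, hg⟩ := hCstep z hz
        intro y hy
        rw [Dtau_succ] at hy
        obtain ⟨w, hw, e, ⟨d, hd, rfl⟩, rfl⟩ := Set.mem_add.mp hy
        have h1 := ih (by omega) _ (hg d hd)
        have h2 := h1 w hw
        rw [phi_g A B F hτ (show j < τ by omega)] at h2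
        have heq : phi A B (j + 1) z + (w + (A ^ j).mulVec (F.mulVec d)) =
            phi A B (j + 1) z + (A ^ j).mulVec (F.mulVec d) + w := by abel
        rw [heq]
        exact h2
    have haux : CtrlInvAux τ A B F U D X (predMap τ A B '' C) := by
      constructor
      · rintro _ ⟨z, hz, rfl⟩
        rw [← phi_top]
        exact hphi τ le_rfl z hz
      · rintro _ ⟨z, hz, rfl⟩
        obtain ⟨u, hu, hg⟩ := hCstep z hz
        exact ⟨u, hu, fun d hd => ⟨_, hg d hd, predMap_g A B F hτ z u d⟩⟩
    have hsub := hChMax _ haux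
    intro z hz
    exact (hCext z).mpr ⟨fun j hj => hphi j hj.le z hz, hsub ⟨z, hz, rfl⟩, hCS hz⟩
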